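/- For every r > 1 and all x, y ∈ (0,1): w_r(x+y) − w_r(x) − w_r(y) ≤ r(r+3)·2^{(r−3)₊}·xy(x+y), where (r−3)₊ = max{r−3, 0}. -/

import Mathlib

/-!
For `x + y ≤ 1` the left side is exactly `(3(r−1)/2)·xy(x+y)`. For `1 < s = x + y < 2`, using
`x³ + y³ = s³ − 3xys`, it equals `(s^r − s) − ((r−1)/2)(s³ − s) + (3(r−1)/2)·xys`; the mean value
theorem gives `s^r − s ≤ (r−1)·2^{(r−2)₊}·s(s−1)`, and `s − 1 < xy` because `(1−x)(1−y) > 0`.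
In both cases the coefficient is at most `(r−1)(2^{(r−2)₊} + 3/2) ≤ (7/2)(r−1)·2^{(r−3)₊} ≤ r(r+3)·2^{(r−3)₊}`.
-/

open Set Real

/-- The weight `w_r`: `w_r(x) = ((r−1)/2)x³` on `[0,1]` and
`w_r(x) = x^r + ((r−3)/2)x` for `x > 1`. -/
noncomputable def wgt (r x : ℝ) : ℝ :=
  if x ≤ 1 then ((r - 1) / 2) * x ^ 3 else x ^ r + ((r - 3) / 2) * x

lemma rpow_le_rpow_max_zero_of_le {t b : ℝ} (q : ℝ) (ht : 1 ≤ t) (htb : t ≤ b) :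
    t ^ q ≤ b ^ max q 0 :=
  calc t ^ q ≤ t ^ max q 0 := rpow_le_rpow_of_exponent_le ht (le_max_left _ _)
    _ ≤ b ^ max q 0 := rpow_le_rpow (by linarith) htb (le_max_right _ _)

lemma rpow_sub_one_le_mul_sub_one {p s b : ℝ} (hp : 0 ≤ p) (hs : 1 ≤ s) (hsb : s ≤ b) :
    s ^ p - 1 ≤ p * b ^ max (p - 1) 0 * (s - 1) := by
  have hcont : ContinuousOn (fun t : ℝ => t ^ p) (Icc 1 b) :=
    fun t ht => (continuousAt_rpow_const t p (Or.inr hp)).continuousWithinAt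
  have hdiff : DifferentiableOn ℝ (fun t : ℝ => t ^ p) (interior (Icc 1 b)) := by
    rw [interior_Icc]
    exact fun t ht =>
      (differentiableAt_rpow_const_of_ne p (by linarith [ht.1])).differentiableWithinAt
  have hderiv :
      ∀ t ∈ interior (Icc 1 b), deriv (fun t : ℝ => t ^ p) t ≤ p * b ^ max (p - 1) 0 := by
    rw [interior_Icc]
    intro t ht
    rw [Real.deriv_rpow_const]
    exact mul_le_mul_of_nonneg_left (rpow_le_rpow_max_zero_of_le _ ht.1.le ht.2.le) hp
  simpa using (convex_Icc 1 b).image_sub_le_mul_sub_of_deriv_le hcont hdiff hderiv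
    1 ⟨le_rfl, hs.trans hsb⟩ s ⟨hs, hsb⟩ hs

lemma two_rpow_max_zero_le (q : ℝ) : (2 : ℝ) ^ max q 0 ≤ 2 * 2 ^ max (q - 1) 0 := by
  calc (2 : ℝ) ^ max q 0 ≤ 2 ^ (max (q - 1) 0 + 1) :=
        rpow_le_rpow_of_exponent_le one_le_two
          (max_le (by linarith [le_max_left (q - 1) 0]) (by linarith [le_max_right (q - 1) 0]))
    _ = 2 * 2 ^ max (q - 1) 0 := by rw [rpow_add_one two_ne_zero, mul_comm]

lemma wgt_of_le_one (r : ℝ) {x : ℝ} (hx : x ≤ 1) : wgt r x = (r - 1) / 2 * x ^ 3 := if_pos hx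

lemma wgt_of_one_lt (r : ℝ) {x : ℝ} (hx : 1 < x) : wgt r x = x ^ r + (r - 3) / 2 * x :=
  if_neg hx.not_ge

lemma wgt_add_sub_le {r x y : ℝ} (hr : 1 < r) (hx : x ∈ Ioo (0 : ℝ) 1) (hy : y ∈ Ioo (0 : ℝ) 1) :
    wgt r (x + y) - wgt r x - wgt r y ≤
      (r - 1) * (2 ^ max (r - 2) 0 + 3 / 2) * (x * y * (x + y)) := by
  obtain ⟨hx0, hx1⟩ := hx
  obtain ⟨hy0, hy1⟩ := hy
  have hK : (0 : ℝ) ≤ 2 ^ max (r - 2) 0 := by positivity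
  have hxys : 0 < x * y * (x + y) := by positivity
  rw [wgt_of_le_one r hx1.le, wgt_of_le_one r hy1.le]
  rcases le_or_gt (x + y) 1 with hs | hs
  · rw [wgt_of_le_one r hs]
    calc _ = (r - 1) * (3 / 2) * (x * y * (x + y)) := by ring
      _ ≤ _ := by gcongr; linarith
  · rw [wgt_of_one_lt r hs]
    have hslack : x + y - 1 < x * y := by nlinarith [mul_pos (sub_pos.2 hx1) (sub_pos.2 hy1)]
    have hpow : (x + y) ^ r - (x + y) ≤ (r - 1) * 2 ^ max (r - 2) 0 * ((x + y) * (x * y)) := by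
      have h := rpow_sub_one_le_mul_sub_one (sub_nonneg.2 hr.le) hs.le (b := 2) (by linarith)
      rw [show r - 1 - 1 = r - 2 by ring] at h
      calc (x + y) ^ r - (x + y) = (x + y) * ((x + y) ^ (r - 1) - 1) := by
            rw [mul_sub, ← rpow_one_add' (by linarith) (by linarith), add_sub_cancel, mul_one]
        _ ≤ (x + y) * ((r - 1) * 2 ^ max (r - 2) 0 * (x * y)) := by
            gcongr
            exact h.trans (by gcongr)
        _ = _ := by ring
    have hcube : 0 ≤ (r - 1) / 2 * ((x + y) ^ 3 - (x + y)) := by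
      have : 0 ≤ (x + y) ^ 3 - (x + y) := by
        nlinarith [mul_pos (mul_pos hxys (sub_pos.2 hs)) (by linarith : 0 < x + y + 1)]
      exact mul_nonneg (by linarith) this
    calc _ = ((x + y) ^ r - (x + y)) - (r - 1) / 2 * ((x + y) ^ 3 - (x + y))
          + (r - 1) * (3 / 2) * (x * y * (x + y)) := by ring
      _ ≤ _ := by linarith

theorem wr_small_small_inequality (r : ℝ) (hr : 1 < r) :
    ∀ x ∈ Ioo (0 : ℝ) 1, ∀ y ∈ Ioo (0 : ℝ) 1,
      wgt r (x + y) - wgt r x - wgt r y ≤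
        r * (r + 3) * (2 : ℝ) ^ max (r - 3) 0 * (x * y * (x + y)) := by
  intro x hx y hy
  set M : ℝ := (2 : ℝ) ^ max (r - 3) 0
  have hM : 1 ≤ M := one_le_rpow one_le_two (le_max_right _ _)
  have hK : (2 : ℝ) ^ max (r - 2) 0 ≤ 2 * M := by
    simpa only [show r - 2 - 1 = r - 3 by ring] using two_rpow_max_zero_le (r - 2)
  have hxys : 0 < x * y * (x + y) := mul_pos (mul_pos hx.1 hy.1) (add_pos hx.1 hy.1)
  calc _ ≤ (r - 1) * (2 ^ max (r - 2) 0 + 3 / 2) * (x * y * (x + y)) :=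
        wgt_add_sub_le hr hx hy
    _ ≤ (r - 1) * (2 * M + 3 / 2 * M) * (x * y * (x + y)) := by gcongr; linarith
    _ ≤ r * (r + 3) * M * (x * y * (x + y)) := by
      refine mul_le_mul_of_nonneg_right ?_ hxys.le
      nlinarith [mul_nonneg (by nlinarith : 0 ≤ r * (r + 3) - 7 / 2 * (r - 1))
        (by linarith : 0 ≤ M)]
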